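/- In the logistic regression setup with a single observation (n = 1) and prior N(0, σ²·I_d) on ℝ^d, let x ∈ ℝ^d with ‖x‖₂ = c, and let D = ((x, 1)) and D' = ((x, −1)) be the neighboring datasets with flipped label. Then for every integer λ ≥ 2, ∫_{ℝ^d} p(w|D)^λ · p(w|D')^{1−λ} dw = (−1)^{λ−1} + 2·Σ_{i=1}^{λ−1} (−1)^{λ−1−i} · exp(i²σ²c²/2); equivalently, exp((λ−1)·D_λ(p(·|D) ‖ p(·|D'))) equals this value. -/
import Mathlib


/-!
STATEMENT 19: In the logistic regression setup with a single observation (`n = 1`) and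
prior `N(0, σ²I_d)`, let `‖x‖ = c`, `D = ((x, 1))` and `D' = ((x, −1))`.  Then for every
integer `λ ≥ 2`,
`∫ p(w|D)^λ · p(w|D')^{1−λ} dw
  = (−1)^{λ−1} + 2·Σ_{i=1}^{λ−1} (−1)^{λ−1−i}·exp(i²σ²c²/2)`.
-/

open MeasureTheory Real
open scoped RealInnerProductSpace

variable {d n : ℕ}

/-- Unnormalized logistic-regression posterior density with Gaussian prior variance
`σ²`: `exp(−‖w‖²/(2σ²))·∏ᵢ 1/(1 + exp(−yᵢ⟨w, xᵢ⟩))`. -/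
noncomputable def logisticUnnormPost (σsq : ℝ)
    (D : Fin n → EuclideanSpace ℝ (Fin d) × ℝ) (w : EuclideanSpace ℝ (Fin d)) : ℝ :=
  Real.exp (-‖w‖ ^ 2 / (2 * σsq)) * ∏ i, (1 + Real.exp (-(D i).2 * ⟪w, (D i).1⟫))⁻¹

/-- Normalized logistic-regression posterior probability density function
(w.r.t. Lebesgue measure on `ℝ^d`). -/
noncomputable def logisticPostPdf (σsq : ℝ)
    (D : Fin n → EuclideanSpace ℝ (Fin d) × ℝ) (w : EuclideanSpace ℝ (Fin d)) : ℝ :=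
  logisticUnnormPost σsq D w / ∫ w', logisticUnnormPost σsq D w'

open MeasureTheory Real
open scoped RealInnerProductSpace

variable {d : ℕ}

private lemma aux_arg_eq (σ : ℝ) (x : EuclideanSpace ℝ (Fin d)) (k : ℝ)
    (w : EuclideanSpace ℝ (Fin d)) :
    -((1 / (2 * σ ^ 2) : ℝ) : ℂ) * (‖w‖ : ℂ) ^ 2 + (k : ℂ) * ((⟪x, w⟫ : ℝ) : ℂ)
      = ((-‖w‖ ^ 2 / (2 * σ ^ 2) + k * ⟪w, x⟫ : ℝ) : ℂ) := by
  push_cast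
  rw [real_inner_comm x w]
  ring

private lemma hbre (σ : ℝ) (hσ : 0 < σ) : 0 < (((1 / (2 * σ ^ 2) : ℝ)) : ℂ).re := by
  rw [Complex.ofReal_re]; positivity

private lemma integrable_gaussExp (σ : ℝ) (hσ : 0 < σ) (x : EuclideanSpace ℝ (Fin d)) (k : ℝ) :
    Integrable (fun w : EuclideanSpace ℝ (Fin d) =>
      rexp (-‖w‖ ^ 2 / (2 * σ ^ 2) + k * ⟪w, x⟫)) := by
  have h := (GaussianFourier.integrable_cexp_neg_mul_sq_norm_add (V := EuclideanSpace ℝ (Fin d))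
      (b := ((1 / (2 * σ ^ 2) : ℝ) : ℂ)) (hbre σ hσ) (k : ℂ) x).re
  refine h.congr (Filter.Eventually.of_forall fun w => ?_)
  show RCLike.re (Complex.exp _) = _
  rw [aux_arg_eq σ x k w, ← Complex.ofReal_exp, RCLike.re_to_complex, Complex.ofReal_re]

private lemma cast_integral (σ : ℝ) (x : EuclideanSpace ℝ (Fin d)) (k : ℝ) :
    ∫ w : EuclideanSpace ℝ (Fin d),
        Complex.exp (-((1 / (2 * σ ^ 2) : ℝ) : ℂ) * (‖w‖ : ℂ) ^ 2 + (k : ℂ) * ((⟪x, w⟫ : ℝ) : ℂ))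
      = ((∫ w : EuclideanSpace ℝ (Fin d), rexp (-‖w‖ ^ 2 / (2 * σ ^ 2) + k * ⟪w, x⟫) : ℝ) : ℂ) := by
  rw [show (fun w : EuclideanSpace ℝ (Fin d) =>
      Complex.exp (-((1 / (2 * σ ^ 2) : ℝ) : ℂ) * (‖w‖ : ℂ) ^ 2 + (k : ℂ) * ((⟪x, w⟫ : ℝ) : ℂ)))
      = fun w : EuclideanSpace ℝ (Fin d) =>
        ((rexp (-‖w‖ ^ 2 / (2 * σ ^ 2) + k * ⟪w, x⟫) : ℝ) : ℂ) from
    funext fun w => by rw [aux_arg_eq σ x k w, ← Complex.ofReal_exp]]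
  exact integral_ofReal

private lemma gauss_moment (σ : ℝ) (hσ : 0 < σ) (x : EuclideanSpace ℝ (Fin d)) (k : ℝ) :
    ∫ w : EuclideanSpace ℝ (Fin d), rexp (-‖w‖ ^ 2 / (2 * σ ^ 2) + k * ⟪w, x⟫)
      = (π / (1 / (2 * σ ^ 2))) ^ ((d : ℝ) / 2) * rexp (k ^ 2 * σ ^ 2 * ‖x‖ ^ 2 / 2) := by
  have h1 := GaussianFourier.integral_cexp_neg_mul_sq_norm_add (V := EuclideanSpace ℝ (Fin d))
      (b := ((1 / (2 * σ ^ 2) : ℝ) : ℂ)) (hbre σ hσ) (k : ℂ) x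
  rw [cast_integral σ x k] at h1
  have hd : Module.finrank ℝ (EuclideanSpace ℝ (Fin d)) = d := by simp
  rw [hd] at h1
  rw [← Complex.ofReal_inj, h1, Complex.ofReal_mul]
  have hσ' : (σ : ℂ) ≠ 0 := by exact_mod_cast hσ.ne'
  congr 1
  · rw [Complex.ofReal_cpow (by positivity)]
    push_cast
    ring_nf
  · rw [Complex.ofReal_exp]
    congr 1
    push_cast
    field_simp
    ring

private lemma integrable_quot (σ : ℝ) (hσ : 0 < σ) (x : EuclideanSpace ℝ (Fin d)) (k s : ℝ) :
    Integrable (fun w : EuclideanSpace ℝ (Fin d) =>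
      rexp (-‖w‖ ^ 2 / (2 * σ ^ 2) + k * ⟪w, x⟫) / (1 + rexp (s * ⟪w, x⟫))) := by
  refine (integrable_gaussExp σ hσ x k).mono ?_ (Filter.Eventually.of_forall fun w => ?_)
  · apply Continuous.aestronglyMeasurable
    have hinner : Continuous fun w : EuclideanSpace ℝ (Fin d) => (⟪w, x⟫ : ℝ) :=
      continuous_id.inner continuous_const
    apply Continuous.div
    · exact Real.continuous_exp.comp (by fun_prop)
    · exact continuous_const.add (Real.continuous_exp.comp (hinner.const_smul s))
    · intro w
      positivity
  · rw [Real.norm_eq_abs, Real.norm_eq_abs, abs_of_pos (by positivity),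
      abs_of_pos (Real.exp_pos _)]
    exact div_le_self (Real.exp_pos _).le (by nlinarith [Real.exp_pos (s * ⟪w, x⟫)])

private lemma int_symm (σ : ℝ) (x : EuclideanSpace ℝ (Fin d)) (k s : ℝ) :
    ∫ w : EuclideanSpace ℝ (Fin d),
        rexp (-‖w‖ ^ 2 / (2 * σ ^ 2) + k * ⟪w, x⟫) / (1 + rexp (s * ⟪w, x⟫))
      = ∫ w : EuclideanSpace ℝ (Fin d),
        rexp (-‖w‖ ^ 2 / (2 * σ ^ 2) + (-k) * ⟪w, x⟫) / (1 + rexp ((-s) * ⟪w, x⟫)) := by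
  rw [← integral_neg_eq_self (fun w : EuclideanSpace ℝ (Fin d) =>
      rexp (-‖w‖ ^ 2 / (2 * σ ^ 2) + k * ⟪w, x⟫) / (1 + rexp (s * ⟪w, x⟫))) volume]
  congr 1
  funext w
  rw [norm_neg, inner_neg_left]
  ring_nf

private lemma base_case (σ : ℝ) (hσ : 0 < σ) (x : EuclideanSpace ℝ (Fin d)) :
    ∫ w : EuclideanSpace ℝ (Fin d),
        rexp (-‖w‖ ^ 2 / (2 * σ ^ 2) + (0 : ℝ) * ⟪w, x⟫) / (1 + rexp ((-1 : ℝ) * ⟪w, x⟫))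
      = (π / (1 / (2 * σ ^ 2))) ^ ((d : ℝ) / 2) * 2⁻¹ := by
  have hsym := int_symm σ x 0 (-1)
  simp only [neg_neg, neg_zero] at hsym
  have hadd := integral_add (μ := volume) (integrable_quot σ hσ x 0 (-1)) (integrable_quot σ hσ x 0 1)
  have hpt : (fun w : EuclideanSpace ℝ (Fin d) =>
      rexp (-‖w‖ ^ 2 / (2 * σ ^ 2) + (0:ℝ) * ⟪w, x⟫) / (1 + rexp ((-1:ℝ) * ⟪w, x⟫))
      + rexp (-‖w‖ ^ 2 / (2 * σ ^ 2) + (0:ℝ) * ⟪w, x⟫) / (1 + rexp ((1:ℝ) * ⟪w, x⟫)))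
      = fun w : EuclideanSpace ℝ (Fin d) => rexp (-‖w‖ ^ 2 / (2 * σ ^ 2) + (0:ℝ) * ⟪w, x⟫) := by
    funext w
    rw [neg_one_mul, one_mul, Real.exp_neg]
    have hE : (0:ℝ) < rexp ⟪w, x⟫ := Real.exp_pos _
    have h2 : (1:ℝ) + (rexp ⟪w, x⟫)⁻¹ ≠ 0 := by positivity
    have h3 : (1:ℝ) + rexp ⟪w, x⟫ ≠ 0 := by positivity
    field_simp
    ring
  rw [hpt] at hadd
  have hmom := gauss_moment σ hσ x 0
  simp only [zero_mul, add_zero, ne_eq, OfNat.ofNat_ne_zero, not_false_eq_true, zero_pow,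
    Real.exp_zero, mul_one, zero_div] at hmom hadd hsym ⊢
  rw [hmom] at hadd
  rw [← hsym] at hadd
  linarith

private lemma rec_step (σ : ℝ) (hσ : 0 < σ) (x : EuclideanSpace ℝ (Fin d)) (k : ℝ) :
    ∫ w : EuclideanSpace ℝ (Fin d),
        rexp (-‖w‖ ^ 2 / (2 * σ ^ 2) + (k + 1) * ⟪w, x⟫) / (1 + rexp ((-1 : ℝ) * ⟪w, x⟫))
      = (∫ w : EuclideanSpace ℝ (Fin d), rexp (-‖w‖ ^ 2 / (2 * σ ^ 2) + (k + 1) * ⟪w, x⟫))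
        - ∫ w : EuclideanSpace ℝ (Fin d),
            rexp (-‖w‖ ^ 2 / (2 * σ ^ 2) + k * ⟪w, x⟫) / (1 + rexp ((-1 : ℝ) * ⟪w, x⟫)) := by
  rw [← integral_sub (integrable_gaussExp σ hσ x (k + 1)) (integrable_quot σ hσ x k (-1))]
  congr 1
  funext w
  have hu : (0:ℝ) < 1 + rexp ((-1:ℝ) * ⟪w, x⟫) := by positivity
  have key : rexp (-‖w‖ ^ 2 / (2 * σ ^ 2) + k * ⟪w, x⟫)
      = rexp (-‖w‖ ^ 2 / (2 * σ ^ 2) + (k + 1) * ⟪w, x⟫) * rexp ((-1:ℝ) * ⟪w, x⟫) := by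
    rw [← Real.exp_add]; ring_nf
  rw [key]
  have h2 : (1:ℝ) + rexp ((-1:ℝ) * ⟪w, x⟫) ≠ 0 := by positivity
  field_simp
  ring

private lemma I_formula (σ : ℝ) (hσ : 0 < σ) (x : EuclideanSpace ℝ (Fin d)) (m : ℕ) :
    ∫ w : EuclideanSpace ℝ (Fin d),
        rexp (-‖w‖ ^ 2 / (2 * σ ^ 2) + (m : ℝ) * ⟪w, x⟫) / (1 + rexp ((-1 : ℝ) * ⟪w, x⟫))
      = (π / (1 / (2 * σ ^ 2))) ^ ((d : ℝ) / 2) *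
          (2⁻¹ * (-1 : ℝ) ^ m + ∑ j ∈ Finset.Icc 1 m,
            (-1 : ℝ) ^ (m - j) * rexp ((j : ℝ) ^ 2 * σ ^ 2 * ‖x‖ ^ 2 / 2)) := by
  induction m with
  | zero => simpa using base_case σ hσ x
  | succ n ih =>
    have hrec := rec_step σ hσ x (n : ℝ)
    have hmom := gauss_moment σ hσ x ((n : ℝ) + 1)
    rw [hmom, ih] at hrec
    rw [show (((n + 1 : ℕ) : ℝ)) = (n : ℝ) + 1 by push_cast; ring, hrec]
    rw [Finset.sum_Icc_succ_top (by omega : 1 ≤ n + 1)]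
    have hs : ∑ j ∈ Finset.Icc 1 n, (-1 : ℝ) ^ (n + 1 - j) * rexp ((j : ℝ) ^ 2 * σ ^ 2 * ‖x‖ ^ 2 / 2)
        = ∑ j ∈ Finset.Icc 1 n, -((-1 : ℝ) ^ (n - j) * rexp ((j : ℝ) ^ 2 * σ ^ 2 * ‖x‖ ^ 2 / 2)) := by
      refine Finset.sum_congr rfl fun j hj => ?_
      have hjn : j ≤ n := (Finset.mem_Icc.mp hj).2
      rw [show n + 1 - j = (n - j) + 1 by omega, pow_succ]
      ring
    rw [hs, Finset.sum_neg_distrib]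
    simp only [Nat.sub_self, pow_zero]
    push_cast
    rw [pow_succ]
    ring

private lemma rpow_algebra (A Z t a : ℝ) (hA : 0 < A) (hZ : 0 < Z) :
    (A * (1 + rexp (-t))⁻¹ / Z) ^ a * (A * (1 + rexp t)⁻¹ / Z) ^ (1 - a)
      = A * rexp ((a - 1) * t) / (1 + rexp (-t)) / Z := by
  have hu : (0:ℝ) < 1 + rexp (-t) := by positivity
  have hv : (0:ℝ) < 1 + rexp t := by positivity
  have hX : (0:ℝ) < A * (1 + rexp (-t))⁻¹ / Z := by positivity
  have hY : (0:ℝ) < A * (1 + rexp t)⁻¹ / Z := by positivity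
  have hR : A * rexp ((a - 1) * t) / (1 + rexp (-t)) / Z
      = rexp (Real.log A + (a - 1) * t - Real.log (1 + rexp (-t)) - Real.log Z) := by
    rw [Real.exp_sub, Real.exp_sub, Real.exp_add, Real.exp_log hA, Real.exp_log hu,
      Real.exp_log hZ]
  have hlogX : Real.log (A * (1 + rexp (-t))⁻¹ / Z)
      = Real.log A - Real.log (1 + rexp (-t)) - Real.log Z := by
    rw [Real.log_div (by positivity) hZ.ne', Real.log_mul hA.ne' (by positivity), Real.log_inv]
    ring
  have hlogv : Real.log (1 + rexp t) = t + Real.log (1 + rexp (-t)) := by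
    rw [show (1:ℝ) + rexp t = rexp t * (1 + rexp (-t)) by
      rw [Real.exp_neg, mul_add, mul_one, mul_inv_cancel₀ (Real.exp_pos t).ne']; ring]
    rw [Real.log_mul (Real.exp_pos t).ne' hu.ne', Real.log_exp]
  have hlogY : Real.log (A * (1 + rexp t)⁻¹ / Z)
      = Real.log A - (t + Real.log (1 + rexp (-t))) - Real.log Z := by
    rw [Real.log_div (by positivity) hZ.ne', Real.log_mul hA.ne' (by positivity), Real.log_inv,
      hlogv]
    ring
  rw [Real.rpow_def_of_pos hX, Real.rpow_def_of_pos hY, ← Real.exp_add, hR, hlogX, hlogY]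
  congr 1
  ring

theorem logistic_regression_renyi_integral_flipped_label
    (hd : 1 ≤ d) (σ : ℝ) (hσ : 0 < σ) (c : ℝ)
    (x : EuclideanSpace ℝ (Fin d)) (hx : ‖x‖ = c)
    (D D' : Fin 1 → EuclideanSpace ℝ (Fin d) × ℝ)
    (hD : D = fun _ => (x, (1 : ℝ))) (hD' : D' = fun _ => (x, (-1 : ℝ)))
    (lam : ℕ) (hlam : 2 ≤ lam) :
    ∫ w : EuclideanSpace ℝ (Fin d),
        logisticPostPdf (σ ^ 2) D w ^ (lam : ℝ) *
          logisticPostPdf (σ ^ 2) D' w ^ (1 - (lam : ℝ)) =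
      (-1 : ℝ) ^ (lam - 1) +
        2 * ∑ i ∈ Finset.Icc 1 (lam - 1),
          (-1 : ℝ) ^ (lam - 1 - i) * Real.exp ((i : ℝ) ^ 2 * σ ^ 2 * c ^ 2 / 2) := by
  subst hx hD hD'
  have hm1 : 1 ≤ lam := by omega
  set m : ℕ := lam - 1 with hm_def
  have hmcast : (m : ℝ) = (lam : ℝ) - 1 := by
    rw [hm_def, Nat.cast_sub hm1, Nat.cast_one]
  set C : ℝ := (π / (1 / (2 * σ ^ 2))) ^ ((d : ℝ) / 2) with hC_def
  have hCpos : 0 < C := by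
    rw [hC_def]; positivity
  set Z : ℝ := ∫ w : EuclideanSpace ℝ (Fin d),
      rexp (-‖w‖ ^ 2 / (2 * σ ^ 2) + (0 : ℝ) * ⟪w, x⟫) / (1 + rexp ((-1 : ℝ) * ⟪w, x⟫))
    with hZ_def
  have hZval : Z = C * 2⁻¹ := base_case σ hσ x
  have hZpos : 0 < Z := by rw [hZval]; positivity
  have hfD : ∀ w : EuclideanSpace ℝ (Fin d),
      logisticUnnormPost (n := 1) (σ ^ 2) (fun _ => (x, (1 : ℝ))) w
        = rexp (-‖w‖ ^ 2 / (2 * σ ^ 2)) * (1 + rexp (-⟪w, x⟫))⁻¹ := by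
    intro w
    simp [logisticUnnormPost, Fin.prod_univ_one]
  have hfD' : ∀ w : EuclideanSpace ℝ (Fin d),
      logisticUnnormPost (n := 1) (σ ^ 2) (fun _ => (x, (-1 : ℝ))) w
        = rexp (-‖w‖ ^ 2 / (2 * σ ^ 2)) * (1 + rexp ⟪w, x⟫)⁻¹ := by
    intro w
    simp [logisticUnnormPost, Fin.prod_univ_one]
  have hZD : (∫ w' : EuclideanSpace ℝ (Fin d),
      logisticUnnormPost (n := 1) (σ ^ 2) (fun _ => (x, (1 : ℝ))) w') = Z := by
    rw [hZ_def]
    congr 1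
    funext w
    rw [hfD w]
    rw [zero_mul, add_zero, neg_one_mul]; ring
  have hZD' : (∫ w' : EuclideanSpace ℝ (Fin d),
      logisticUnnormPost (n := 1) (σ ^ 2) (fun _ => (x, (-1 : ℝ))) w') = Z := by
    have hsym := int_symm σ x 0 1
    simp only [neg_zero] at hsym
    rw [show (∫ w' : EuclideanSpace ℝ (Fin d),
        logisticUnnormPost (n := 1) (σ ^ 2) (fun _ => (x, (-1 : ℝ))) w')
        = ∫ w : EuclideanSpace ℝ (Fin d),
          rexp (-‖w‖ ^ 2 / (2 * σ ^ 2) + (0 : ℝ) * ⟪w, x⟫) / (1 + rexp ((1 : ℝ) * ⟪w, x⟫)) by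
      congr 1
      funext w
      rw [hfD' w, zero_mul, add_zero, one_mul]; ring]
    rw [hsym, hZ_def]
  have hint : ∀ w : EuclideanSpace ℝ (Fin d),
      logisticPostPdf (n := 1) (σ ^ 2) (fun _ => (x, (1 : ℝ))) w ^ (lam : ℝ) *
        logisticPostPdf (n := 1) (σ ^ 2) (fun _ => (x, (-1 : ℝ))) w ^ (1 - (lam : ℝ))
      = rexp (-‖w‖ ^ 2 / (2 * σ ^ 2) + (m : ℝ) * ⟪w, x⟫) / (1 + rexp ((-1 : ℝ) * ⟪w, x⟫)) / Z := by
    intro w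
    rw [logisticPostPdf, logisticPostPdf, hZD, hZD', hfD w, hfD' w]
    rw [rpow_algebra (rexp (-‖w‖ ^ 2 / (2 * σ ^ 2))) Z ⟪w, x⟫ (lam : ℝ) (Real.exp_pos _) hZpos]
    rw [← hmcast, Real.exp_add, neg_one_mul]
  rw [integral_congr_ae (Filter.Eventually.of_forall hint)]
  rw [integral_div, I_formula σ hσ x m, ← hC_def, hZval]
  rw [div_eq_iff (by positivity)]
  ring
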